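/- arXiv:2001.02648 — 2 statements merged into one kernel-verified Lean document; each statement's English description precedes it below -/
import Mathlib

section
/- Let α be a growth class, i.e., an equivalence class of functions in Ω∞ under the relation f ∼ g ⟺ ∃k, f ≺ gᵏ ∧ g ≺ fᵏ (where f ≺ g means f(n) < g(n) for all sufficiently large n, and gᵏ is the k-fold composition). Then the set S_α(ω) = {ρ ∈ Perm(ℕ) : ρ and ρ⁻¹ are each bounded by some function in α} is a subgroup of the group of all permutations of ℕ. -/
/-!
If `ρ` is bounded by `g` and `σ` by `h`, then `ρ * σ` is bounded by `g ∘ h`, and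
`(ρ * σ)⁻¹ = σ⁻¹ * ρ⁻¹`; since the growth class of `f` is closed under composition, the set is
closed under products. It is closed under inverses by its symmetric definition, and the
identity is bounded by `f` itself.
-/

/-- Ω∞ : functions g : ℕ → ℕ with g(n+1) ≥ g(n) > n for all n. -/
def OmegaInf (g : ℕ → ℕ) : Prop := ∀ n : ℕ, n < g n ∧ g n ≤ g (n + 1)

/-- f ≺ g : f(n) < g(n) for all sufficiently large n. -/
def Prec (f g : ℕ → ℕ) : Prop := ∃ n₀ : ℕ, ∀ n > n₀, f n < g n

/-- f ∼ g : ∃ k, f ≺ g^[k] and g ≺ f^[k]. -/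
def SimGrowth (f g : ℕ → ℕ) : Prop := ∃ k : ℕ, Prec f (g^[k]) ∧ Prec g (f^[k])

/-- ρ is bounded by g if for all n and m ≤ n, ρ(m) ≤ g(n). -/
def BoundedBy (ρ : Equiv.Perm ℕ) (g : ℕ → ℕ) : Prop :=
  ∀ n m : ℕ, m ≤ n → ρ m ≤ g n

namespace OmegaInf

variable {g h : ℕ → ℕ}

lemma monotone (hg : OmegaInf g) : Monotone g :=
  monotone_nat_of_le_succ fun n => (hg n).2

lemma id_le (hg : OmegaInf g) : id ≤ g := fun n => (hg n).1.le

lemma comp (hg : OmegaInf g) (hh : OmegaInf h) : OmegaInf (g ∘ h) := fun n =>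
  ⟨(hh n).1.trans_le (hg.id_le _), hg.monotone (hh.monotone n.le_succ)⟩

end OmegaInf

lemma SimGrowth.refl {f : ℕ → ℕ} (hf : OmegaInf f) : SimGrowth f f :=
  ⟨2, ⟨0, fun n _ => (hf (f n)).1⟩, ⟨0, fun n _ => (hf (f n)).1⟩⟩

lemma SimGrowth.comp {f g h : ℕ → ℕ} (hf : Monotone f) (hg : OmegaInf g) (hh : OmegaInf h)
    (hfg : SimGrowth f g) (hfh : SimGrowth f h) : SimGrowth f (g ∘ h) := by
  obtain ⟨k₁, ⟨a₁, hf_g⟩, ⟨b₁, hg_f⟩⟩ := hfg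
  obtain ⟨k₂, -, ⟨b₂, hh_f⟩⟩ := hfh
  refine ⟨k₁ + k₂, ⟨a₁, fun n hn => ?_⟩, ⟨max b₁ b₂, fun n hn => ?_⟩⟩
  · have hgh := hg.comp hh
    calc f n < g^[k₁] n := hf_g n hn
      _ ≤ (g ∘ h)^[k₁] n :=
        hgh.monotone.le_iterate_of_le (fun m => hg.monotone (hh.id_le m)) k₁ n
      _ ≤ (g ∘ h)^[k₁ + k₂] n :=
        Function.monotone_iterate_of_id_le hgh.id_le (Nat.le_add_right k₁ k₂) n
  · obtain ⟨hn₁, hn₂⟩ := max_lt_iff.mp hn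
    calc g (h n) < f^[k₁] (h n) := hg_f _ (hn₁.trans (hh n).1)
      _ ≤ f^[k₁] (f^[k₂] n) := hf.iterate k₁ (hh_f n hn₂).le
      _ = f^[k₁ + k₂] n := (Function.iterate_add_apply f k₁ k₂ n).symm

namespace BoundedBy

variable {ρ σ : Equiv.Perm ℕ} {g h : ℕ → ℕ}

lemma one (hg : id ≤ g) : BoundedBy 1 g := fun n _ hmn => hmn.trans (hg n)

lemma mul (hρ : BoundedBy ρ g) (hσ : BoundedBy σ h) : BoundedBy (ρ * σ) (g ∘ h) :=
  fun n m hmn => hρ (h n) (σ m) (hσ n m hmn)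

end BoundedBy

def BoundedInGrowthClass (f : ℕ → ℕ) (ρ : Equiv.Perm ℕ) : Prop :=
  ∃ g, OmegaInf g ∧ SimGrowth f g ∧ BoundedBy ρ g

namespace BoundedInGrowthClass

variable {f : ℕ → ℕ} {ρ σ : Equiv.Perm ℕ}

lemma one (hf : OmegaInf f) : BoundedInGrowthClass f 1 :=
  ⟨f, hf, SimGrowth.refl hf, BoundedBy.one hf.id_le⟩

lemma mul (hf : Monotone f) (hρ : BoundedInGrowthClass f ρ) (hσ : BoundedInGrowthClass f σ) :
    BoundedInGrowthClass f (ρ * σ) := by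
  obtain ⟨g, hg, hfg, hρg⟩ := hρ
  obtain ⟨h, hh, hfh, hσh⟩ := hσ
  exact ⟨g ∘ h, hg.comp hh, hfg.comp hf hg hh hfh, hρg.mul hσh⟩

end BoundedInGrowthClass

def growthClassPermSubgroup {f : ℕ → ℕ} (hf : OmegaInf f) : Subgroup (Equiv.Perm ℕ) where
  carrier := {ρ | BoundedInGrowthClass f ρ ∧ BoundedInGrowthClass f ρ⁻¹}
  one_mem' := ⟨.one hf, by simpa only [inv_one] using .one hf⟩
  mul_mem' := fun ⟨hρ, hρ'⟩ ⟨hσ, hσ'⟩ =>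
    ⟨hρ.mul hf.monotone hσ, by simpa only [mul_inv_rev] using hσ'.mul hf.monotone hρ'⟩
  inv_mem' := fun ⟨hρ, hρ'⟩ => ⟨hρ', by simpa only [inv_inv] using hρ⟩

/-- For a growth class α = [f]∼, the set S_α(ω) of permutations ρ such that ρ and ρ⁻¹
are each bounded by some function of the class is a subgroup of Perm(ℕ). -/
theorem growth_class_subgroup (f : ℕ → ℕ) (hf : OmegaInf f) :
    ∃ H : Subgroup (Equiv.Perm ℕ), ∀ ρ : Equiv.Perm ℕ,
      ρ ∈ H ↔
        ((∃ g, OmegaInf g ∧ SimGrowth f g ∧ BoundedBy ρ g) ∧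
         (∃ g, OmegaInf g ∧ SimGrowth f g ∧ BoundedBy ρ⁻¹ g)) :=
  ⟨growthClassPermSubgroup hf, fun _ => Iff.rfl⟩
end

section
/- Let g : ℕ → ℕ be in Ω∞ with total computable profile, and let E ⊆ Perm(ℕ) be a finite g-chunk. Fix n ∈ ℕ and a supp-morphism σₙ : E → Sₙ. Let m be maximal with g(m) ≤ n. Then for all ρ, ρ' ∈ E with ρ∘ρ' ∈ E, the Hamming distance between σₙ(ρ)·σₙ(ρ') and σₙ(ρ∘ρ') is at most 2(n−m)/n. -/
/-- Normalized Hamming distance on Sₙ, modelled as permutations of ℕ supported on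
{0, …, n-1}: d_H(g,h) = 1 − |Fix(g⁻¹h) ∩ {0,…,n-1}| / n. -/
noncomputable def dHn (n : ℕ) (g h : Equiv.Perm ℕ) : ℝ :=
  1 - ((Finset.range n).filter fun k => (g⁻¹ * h) k = k).card / n

/-!
At every `k < n` at which neither `ρ'` nor `ρ ∘ ρ'` leaves `{0, …, n-1}`, the supp-morphism agrees
with `ρ`, `ρ'` and `ρ ∘ ρ'`, so `σ ρ * σ ρ'` and `σ (ρ * ρ')` coincide there. A permutation of a
`g`-chunk sends every `k ≤ m` to at most `g m ≤ n`, so at most one such `k` (the preimage of `n`)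
leaves `{0, …, n-1}`; each of the two exceptional sets therefore has at most `n - m` elements.
-/

open Finset

lemma dHn_eq_card_filter_ne_div {n : ℕ} (hn : 0 < n) (a b : Equiv.Perm ℕ) :
    dHn n a b = #{k ∈ range n | (a⁻¹ * b) k ≠ k} / n := by
  have hsplit : (#{k ∈ range n | (a⁻¹ * b) k = k} + #{k ∈ range n | (a⁻¹ * b) k ≠ k} : ℝ) = n := by
    exact_mod_cast (card_filter_add_card_filter_not _).trans (card_range n)
  have hnR : (n : ℝ) ≠ 0 := by exact_mod_cast hn.ne'
  rw [dHn, eq_div_iff hnR, sub_mul, div_mul_cancel₀ _ hnR]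
  linarith

lemma card_filter_le_apply_le_sub {τ : Equiv.Perm ℕ} {m n : ℕ} (hmn : m < n)
    (hτ : ∀ k ≤ m, τ k ≤ n) : #{k ∈ range n | n ≤ τ k} ≤ n - m := by
  have hsub : {k ∈ range n | n ≤ τ k} ⊆ insert (τ⁻¹ n) (Ico (m + 1) n) := by
    intro k hk
    rw [mem_filter, mem_range] at hk
    rcases le_or_gt k m with hkm | hkm
    · have hτk : τ k = n := le_antisymm (hτ k hkm) hk.2
      simp [← hτk]
    · exact mem_insert_of_mem (mem_Ico.2 ⟨hkm, hk.1⟩)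
  calc #{k ∈ range n | n ≤ τ k}
      ≤ #(Ico (m + 1) n) + 1 := (card_le_card hsub).trans (card_insert_le _ _)
    _ = n - m := by rw [Nat.card_Ico]; omega

lemma BoundedBy.apply_le {ρ : Equiv.Perm ℕ} {g : ℕ → ℕ} (hρ : BoundedBy ρ g) {m n : ℕ}
    (hm : g m ≤ n) : ∀ k ≤ m, ρ k ≤ n :=
  fun k hk => (hρ m k hk).trans hm

section AgreeOnRange

variable {n : ℕ} {a b c ρ ρ' : Equiv.Perm ℕ}
  (ha : ∀ k < n, ρ k < n → a k = ρ k) (hb : ∀ k < n, ρ' k < n → b k = ρ' k)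
  (hc : ∀ k < n, (ρ * ρ') k < n → c k = (ρ * ρ') k)
include ha hb hc

lemma mul_inv_mul_apply_eq_self {k : ℕ} (hk : k < n) (hρ'k : ρ' k < n)
    (hρρ'k : (ρ * ρ') k < n) : ((a * b)⁻¹ * c) k = k := by
  rw [Equiv.Perm.mul_apply, Equiv.Perm.inv_eq_iff_eq, hc k hk hρρ'k, Equiv.Perm.mul_apply,
    Equiv.Perm.mul_apply, hb k hk hρ'k, ha _ hρ'k hρρ'k]

lemma card_filter_mul_inv_mul_apply_ne_le :
    #{k ∈ range n | ((a * b)⁻¹ * c) k ≠ k} ≤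
      #{k ∈ range n | n ≤ ρ' k} + #{k ∈ range n | n ≤ (ρ * ρ') k} := by
  refine (card_le_card fun k hk => ?_).trans (card_union_le _ _)
  rw [mem_filter, mem_range] at hk
  by_contra hout
  simp only [mem_union, mem_filter, mem_range, not_or, not_and, not_le] at hout
  exact hk.2 (mul_inv_mul_apply_eq_self ha hb hc hk.1 (hout.1 hk.1) (hout.2 hk.1))

end AgreeOnRange

theorem suppMorphism_eps_morphism_general (g : ℕ → ℕ) (hg : OmegaInf g)
    (E : Finset (Equiv.Perm ℕ))
    (hE : ∀ ρ ∈ E, BoundedBy ρ g)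
    (n : ℕ)
    (σ : Equiv.Perm ℕ → Equiv.Perm ℕ)
    (hσagree : ∀ ρ ∈ E, ∀ k : ℕ, k < n → ρ k < n → σ ρ k = ρ k)
    (m : ℕ) (hm : g m ≤ n)
    (ρ ρ' : Equiv.Perm ℕ) (hρ : ρ ∈ E) (hρ' : ρ' ∈ E) (hmul : ρ * ρ' ∈ E) :
    dHn n (σ ρ * σ ρ') (σ (ρ * ρ')) ≤ 2 * ((n : ℝ) - m) / n := by
  have hmn : m < n := (hg m).1.trans_le hm
  have hcard := (card_filter_mul_inv_mul_apply_ne_le (hσagree ρ hρ) (hσagree ρ' hρ')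
    (hσagree _ hmul)).trans (add_le_add
      (card_filter_le_apply_le_sub hmn ((hE ρ' hρ').apply_le hm))
      (card_filter_le_apply_le_sub hmn ((hE _ hmul).apply_le hm)))
  rw [dHn_eq_card_filter_ne_div (by omega)]
  gcongr
  calc (#{k ∈ range n | ((σ ρ * σ ρ')⁻¹ * σ (ρ * ρ')) k ≠ k} : ℝ)
      ≤ ((n - m + (n - m) : ℕ) : ℝ) := by exact_mod_cast hcard
    _ = 2 * ((n : ℝ) - m) := by push_cast [Nat.cast_sub hmn.le]; ring

/-- For a g-chunk E and a supp-morphism σ into Sₙ (modelled as permutations of ℕ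
fixing every k ≥ n), with m maximal such that g(m) ≤ n, the Hamming distance between
σ(ρ)·σ(ρ') and σ(ρ∘ρ') is at most 2(n−m)/n, for ρ, ρ', ρ∘ρ' ∈ E. -/
theorem suppMorphism_eps_morphism (g : ℕ → ℕ) (hg : OmegaInf g)
    (E : Finset (Equiv.Perm ℕ)) (hunit : (1 : Equiv.Perm ℕ) ∈ E)
    (hE : ∀ ρ ∈ E, BoundedBy ρ g)
    (n : ℕ) (hn : 0 < n)
    (σ : Equiv.Perm ℕ → Equiv.Perm ℕ)
    (hσ1 : σ 1 = 1)
    (hσsupp : ∀ ρ ∈ E, ∀ k : ℕ, n ≤ k → σ ρ k = k)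
    (hσagree : ∀ ρ ∈ E, ∀ k : ℕ, k < n → ρ k < n → σ ρ k = ρ k)
    (m : ℕ) (hm : g m ≤ n) (hmax : ∀ m' : ℕ, g m' ≤ n → m' ≤ m)
    (ρ ρ' : Equiv.Perm ℕ) (hρ : ρ ∈ E) (hρ' : ρ' ∈ E) (hmul : ρ * ρ' ∈ E) :
    dHn n (σ ρ * σ ρ') (σ (ρ * ρ')) ≤ 2 * ((n : ℝ) - m) / n :=
  suppMorphism_eps_morphism_general g hg E hE n σ hσagree m hm ρ ρ' hρ hρ' hmul
end
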